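/- arXiv:2010.00930 — 2 statements merged into one kernel-verified Lean document; each statement's English description precedes it below -/
import Mathlib

section
/- Let T ∈ T^(m)(n) and let X_1, …, X_t be the maximal cadet sequences of T (which partition the set of nodes of T). Then the contribution of T equals the product of the contributions of its maximal cadet sequences: r_S(T) = ∏_{j=1}^t r_S(X_j). -/
open scoped Classical

/-- The derived sets `S⁻ᵢⱼ` of nonnegative integers:
for `i < j`, `S⁻ᵢⱼ = {s ≥ 0 : -s ∈ Sᵢⱼ}`, and `S⁻ⱼᵢ = {0} ∪ {s > 0 : s ∈ Sᵢⱼ}`. -/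
def Sminus {n : ℕ} (S : Fin n → Fin n → Finset ℤ) (i j : Fin n) : Set ℕ :=
  if i < j then {s : ℕ | -(s : ℤ) ∈ S i j}
  else {0} ∪ {s : ℕ | 0 < s ∧ (s : ℤ) ∈ S j i}

/-- `m`: the maximal absolute value of an element of some `S i j` (`i < j`). -/
def mOf {n : ℕ} (S : Fin n → Fin n → Finset ℤ) : ℕ :=
  Finset.univ.sup fun p : Fin n × Fin n =>
    if p.1 < p.2 then (S p.1 p.2).sup (fun s => s.natAbs) else 0

/-- A rooted labeled plane tree with `n` nodes (labeled by `Fin n`, index `i` representing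
the label `i+1`, so the node `1` is `(0 : Fin n)`), each node having exactly `m+1`
linearly ordered children; children that are not nodes are unlabeled leaves and carry no
further data. `parent v` is the parent node of the node `v` (with the convention
`parent root = root`), and `pos v` is the position of `v` among the `m+1` children of its
parent, so `(pos v : ℕ)` is the number `lsib v` of left siblings of `v`. -/
structure PlaneTree (n m : ℕ) where
  root : Fin n
  parent : Fin n → Fin n
  pos : Fin n → Fin (m + 1)
  parent_root : parent root = root
  reaches_root : ∀ v : Fin n, ∃ k : ℕ, parent^[k] v = root
  pos_inj : ∀ v w : Fin n, v ≠ root → w ≠ root → parent v = parent w → pos v = pos w → v = w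

namespace PlaneTree

variable {n m : ℕ}

/-- `v` is a child of `u` (among the nodes). -/
def IsChild (T : PlaneTree n m) (v u : Fin n) : Prop :=
  v ≠ T.root ∧ T.parent v = u

/-- `v` is the cadet of `u`: the rightmost child of `u` that is a node. -/
def IsCadet (T : PlaneTree n m) (u v : Fin n) : Prop :=
  T.IsChild v u ∧ ∀ w : Fin n, T.IsChild w u → T.pos w ≤ T.pos v

/-- The number of left siblings of `v`. -/
def lsib (T : PlaneTree n m) (v : Fin n) : ℕ := (T.pos v : ℕ)

end PlaneTree

/-- `(v a, v (a+1), …, v b)` is a cadet sequence of `T` (1-indexed, `1 ≤ a ≤ b`). -/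
def IsCadetWindow {n m : ℕ} (T : PlaneTree n m) (v : ℕ → Fin n) (a b : ℕ) : Prop :=
  1 ≤ a ∧ a ≤ b ∧ ∀ p : ℕ, a < p → p ≤ b → T.IsCadet (v (p - 1)) (v p)

/-- `v` is injective on the indices `a, …, b`. -/
def WindowInj {n : ℕ} (v : ℕ → Fin n) (a b : ℕ) : Prop :=
  ∀ p q : ℕ, a ≤ p → p ≤ b → a ≤ q → q ≤ b → v p = v q → p = q

/-- `(v a, …, v b)` is an `S`-cadet sequence of `T`. -/
def IsSCadetWindow {n m : ℕ} (S : Fin n → Fin n → Finset ℤ) (T : PlaneTree n m)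
    (v : ℕ → Fin n) (a b : ℕ) : Prop :=
  IsCadetWindow T v a b ∧
    ∀ i j : ℕ, a ≤ i → i < j → j ≤ b →
      (∑ p ∈ Finset.Icc (i + 1) j, T.lsib (v p)) ∉ Sminus S (v i) (v j)

/-- `(v 1, …, v k)` is a maximal cadet sequence of `T`: all children of `v k` are
leaves, and no node has `v 1` as its cadet. -/
def IsMaxCadetSeq {n m : ℕ} (T : PlaneTree n m) (k : ℕ) (v : ℕ → Fin n) : Prop :=
  IsCadetWindow T v 1 k ∧ (∀ w : Fin n, ¬ T.IsChild w (v k)) ∧ ∀ u : Fin n, ¬ T.IsCadet u (v 1)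

/-- `(v a, …, v b)` is a maximal `S`-cadet sequence inside the ambient cadet sequence
`(v 1, …, v k)`. -/
def IsMaxSCadetWindow {n m : ℕ} (S : Fin n → Fin n → Finset ℤ) (T : PlaneTree n m)
    (k : ℕ) (v : ℕ → Fin n) (a b : ℕ) : Prop :=
  b ≤ k ∧ IsSCadetWindow S T v a b ∧
    (a = 1 ∨ ¬ IsSCadetWindow S T v (a - 1) b) ∧
    (b = k ∨ ¬ IsSCadetWindow S T v a (b + 1))

/-- `Y` is (the set of nodes of) a maximal `S`-cadet sequence of `T`. -/
def IsMaxSCadetSet {n m : ℕ} (S : Fin n → Fin n → Finset ℤ) (T : PlaneTree n m)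
    (Y : Finset (Fin n)) : Prop :=
  ∃ (k : ℕ) (v : ℕ → Fin n) (a b : ℕ), IsMaxCadetSeq T k v ∧ WindowInj v 1 k ∧
    IsMaxSCadetWindow S T k v a b ∧ Y = (Finset.Icc a b).image v

/-- `Y` is (the set of nodes of) a nonempty cadet sequence of `T`. -/
def IsCadetSeqSet {n m : ℕ} (T : PlaneTree n m) (Y : Finset (Fin n)) : Prop :=
  ∃ (k : ℕ) (v : ℕ → Fin n), IsCadetWindow T v 1 k ∧ WindowInj v 1 k ∧
    Y = (Finset.Icc 1 k).image v

/-- `X` is (the set of nodes of) an `S`-connected cadet sequence of `T`: it is a cadet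
sequence, every maximal `S`-cadet sequence is disjoint from it or contained in it, and no
cadet sequence with this property is properly contained in it. -/
def SConnected {n m : ℕ} (S : Fin n → Fin n → Finset ℤ) (T : PlaneTree n m)
    (X : Finset (Fin n)) : Prop :=
  IsCadetSeqSet T X ∧
    (∀ Y, IsMaxSCadetSet S T Y → X ∩ Y = ∅ ∨ Y ⊆ X) ∧
    ∀ X', IsCadetSeqSet T X' → (∀ Y, IsMaxSCadetSet S T Y → X' ∩ Y = ∅ ∨ Y ⊆ X') →
      X' ⊆ X → X' = X

/-- `Y` is (the set of nodes of) an `S`-cadet sequence of `T` (a possible box). -/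
def IsSBox {n m : ℕ} (S : Fin n → Fin n → Finset ℤ) (T : PlaneTree n m)
    (Y : Finset (Fin n)) : Prop :=
  ∃ (k : ℕ) (v : ℕ → Fin n), IsSCadetWindow S T v 1 k ∧ WindowInj v 1 k ∧
    Y = (Finset.Icc 1 k).image v

/-- `B` is an `S`-boxing of the set of nodes `X`: a partition of `X` into
`S`-cadet sequences. -/
def IsSBoxingOf {n m : ℕ} (S : Fin n → Fin n → Finset ℤ) (T : PlaneTree n m)
    (X : Finset (Fin n)) (B : Finset (Finset (Fin n))) : Prop :=
  (∀ Y ∈ B, IsSBox S T Y ∧ Y ⊆ X) ∧ ∀ u ∈ X, ∃! Y, Y ∈ B ∧ u ∈ Y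

/-- The contribution `r_S(X)` of a cadet sequence with (injective) node set `X`
(whose length is `X.card`): `∑_{B ∈ U_S(X)} (-1)^(|X| - |B|)`. -/
noncomputable def contrib {n m : ℕ} (S : Fin n → Fin n → Finset ℤ) (T : PlaneTree n m)
    (X : Finset (Fin n)) : ℤ :=
  ∑ B : Finset (Finset (Fin n)),
    if IsSBoxingOf S T X B then (-1 : ℤ) ^ (X.card - B.card) else 0

/-- The contribution `r_S(T) = ∑_{B ∈ U_S(T)} (-1)^(n - |B|)` of the tree `T`. -/
noncomputable def treeContrib {n m : ℕ} (S : Fin n → Fin n → Finset ℤ)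
    (T : PlaneTree n m) : ℤ :=
  contrib S T Finset.univ

/-- The tuple `S` is transitive. -/
def TransitiveS {n : ℕ} (S : Fin n → Fin n → Finset ℤ) : Prop :=
  ∀ i j k : Fin n, i ≠ j → j ≠ k → i ≠ k →
    ∀ s t : ℕ, s ∉ Sminus S i j → t ∉ Sminus S j k → s + t ∉ Sminus S i k

/-- The arrangement `A_S` is almost transitive (`(i : ℕ) = 0` encodes "`i` is the node `1`"). -/
def AlmostTransitive {n : ℕ} (S : Fin n → Fin n → Finset ℤ) : Prop :=
  ∀ i j k : Fin n, i ≠ j → j ≠ k → i ≠ k → (i : ℕ) ≠ 0 → (k : ℕ) ≠ 0 →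
    ∀ s t : ℕ, s ∉ Sminus S i j → t ∉ Sminus S j k → s + t ∉ Sminus S i k

/-- `A_S` is an Ish-type arrangement: `0 ∈ Sᵢⱼ` for all `i < j`, and `Sᵢⱼ = {0}`
whenever `1 < i < j`. -/
def IshType {n : ℕ} (S : Fin n → Fin n → Finset ℤ) : Prop :=
  (∀ i j : Fin n, i < j → (0 : ℤ) ∈ S i j) ∧
    ∀ i j : Fin n, 0 < (i : ℕ) → i < j → S i j = {0}

/-- `A_S` is a nested Ish arrangement. -/
def NestedIsh {n : ℕ} (S : Fin n → Fin n → Finset ℤ) : Prop :=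
  IshType S ∧ ∀ i j k : Fin n, (i : ℕ) = 0 → 0 < (j : ℕ) → j < k → S i j ⊆ S i k

/-- The lower inefficiency `E_l(T)`: the number of lower inefficient nodes of `T`,
i.e. nodes `w` that are left siblings of the node `1` with `lsib w ∉ S⁻_{w,1}`. -/
noncomputable def Elow {n m : ℕ} [NeZero n] (S : Fin n → Fin n → Finset ℤ)
    (T : PlaneTree n m) : ℕ :=
  (Finset.univ.filter fun w : Fin n =>
    w ≠ T.root ∧ (0 : Fin n) ≠ T.root ∧ T.parent w = T.parent 0 ∧ T.pos w < T.pos 0 ∧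
      T.lsib w ∉ Sminus S w 0).card

/-- The upper inefficiency `E_u(T)`: the number of upper inefficient nodes of `T`,
i.e. nodes `w` with parent the node `1` that are not the cadet of `1`, with
`lsib w ∉ S⁻_{1,w}`. -/
noncomputable def Eup {n m : ℕ} [NeZero n] (S : Fin n → Fin n → Finset ℤ)
    (T : PlaneTree n m) : ℕ :=
  (Finset.univ.filter fun w : Fin n =>
    T.IsChild w 0 ∧ ¬ T.IsCadet 0 w ∧ T.lsib w ∉ Sminus S 0 w).card

/-- The class `S(e_l, ℓ_l, e_u, ℓ_u)` of trees in `T^(m)(n)` with nonzero contribution,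
lower/upper inefficiencies `e_l, e_u` and lower/upper 1-lengths `ℓ_l, ℓ_u` (the latter
expressed via the maximal `S`-cadet sequence `{v_{j-ℓ_l}, …, v_j, …, v_{j+ℓ_u}}`
around the node `1 = v j` inside its maximal cadet sequence `(v 1, …, v t)`). -/
def ClassS {n : ℕ} [NeZero n] (S : Fin n → Fin n → Finset ℤ) (el ll eu lu : ℕ) :
    Set (PlaneTree n (mOf S)) :=
  {T | treeContrib S T ≠ 0 ∧ Elow S T = el ∧ Eup S T = eu ∧
    ∃ (t : ℕ) (v : ℕ → Fin n) (j : ℕ), IsMaxCadetSeq T t v ∧ WindowInj v 1 t ∧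
      1 ≤ j ∧ j ≤ t ∧ v j = 0 ∧ ll < j ∧ j + lu ≤ t ∧
      IsMaxSCadetWindow S T t v (j - ll) (j + lu)}

/-- The complement in `ℝ^n` of the union of the hyperplanes `xᵢ - xⱼ = s`
(`i < j`, `s ∈ S i j`) of the arrangement `A_S`. -/
def complementSet {n : ℕ} (S : Fin n → Fin n → Finset ℤ) : Set (Fin n → ℝ) :=
  {x | ∀ i j : Fin n, i < j → ∀ s ∈ S i j, x i - x j ≠ (s : ℝ)}

/-- The number of regions `r_S` of the arrangement `A_S`: the number of connected
components of the complement of its hyperplanes. -/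
noncomputable def numRegions {n : ℕ} (S : Fin n → Fin n → Finset ℤ) : ℕ :=
  Nat.card (ConnectedComponents ↥(complementSet S))

/-- A rooted labeled plane tree with `n` nodes and arbitrary numbers of children:
`nchild u` is the total number of (linearly ordered) children of the node `u`, and
`pos v` the position of the node `v` among the children of its parent (so
`lsib v = pos v` and `rsib v = nchild (parent v) - 1 - pos v`). Children not occupied
by nodes are unlabeled leaves. -/
structure LPTree (n : ℕ) where
  root : Fin n
  parent : Fin n → Fin n
  pos : Fin n → ℕ
  nchild : Fin n → ℕ
  parent_root : parent root = root
  reaches_root : ∀ v : Fin n, ∃ k : ℕ, parent^[k] v = root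
  pos_lt : ∀ v : Fin n, v ≠ root → pos v < nchild (parent v)
  pos_inj : ∀ v w : Fin n, v ≠ root → w ≠ root → parent v = parent w → pos v = pos w → v = w

/-- Membership in the set `𝔗(S)`: the root is the node `1`, the node `1` has `2m+2`
children, every other node has exactly one child, and every node `k ≠ 1` satisfies
`lsib k ∈ S⁻₁ₖ` or `rsib k ∈ S⁻ₖ₁`. -/
def IsFrakT {n : ℕ} [NeZero n] (S : Fin n → Fin n → Finset ℤ) (T : LPTree n) : Prop :=
  T.root = 0 ∧ T.nchild 0 = 2 * mOf S + 2 ∧ (∀ v : Fin n, v ≠ 0 → T.nchild v = 1) ∧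
    ∀ v : Fin n, v ≠ 0 →
      (T.pos v ∈ Sminus S 0 v ∨ (T.nchild (T.parent v) - 1 - T.pos v) ∈ Sminus S v 0)

/-- For an `S`-connected cadet sequence `(v 1, …, v k)` whose maximal `S`-cadet
sequences are the windows `[a r, b r]` (`1 ≤ r ≤ k'`, in increasing order of last index),
`LastIdx a b k' j` is the index of the largest-indexed node of `X_j \ X_{j+1}`
(with `X_{k'+1} = {0}` containing no node of the sequence). -/
def LastIdx (a b : ℕ → ℕ) (k' j : ℕ) : ℕ :=
  ((Finset.Icc (a j) (b j)) \
    (if j = k' then (∅ : Finset ℕ) else Finset.Icc (a (j + 1)) (b (j + 1)))).sup id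

/-- `X_i` reaches `X_j`: the parent of the largest-indexed node of `X_j \ X_{j+1}`
belongs to `X_i`, with the conventions `X_0 = {0}`, `parent (v 1) = 0`
(the index `0` plays the role of `X_0`). -/
def Reaches (a b : ℕ → ℕ) (k' i j : ℕ) : Prop :=
  i < j ∧ j ≤ k' ∧
    ((i = 0 ∧ LastIdx a b k' j = 1) ∨
      (1 ≤ i ∧ 2 ≤ LastIdx a b k' j ∧ a i ≤ LastIdx a b k' j - 1 ∧
        LastIdx a b k' j - 1 ≤ b i))

/-- A successful run of the algorithm: `idx 0 = 0`; at each step, the next term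
`idx (j+1)` is the smallest-indexed maximal `S`-cadet sequence reached by `X_{idx j}`
but not reached by any `X_{idx l}` with `l < j`; the run terminates at `k'`
after `t` steps. -/
def AlgRun (a b : ℕ → ℕ) (k' t : ℕ) (idx : ℕ → ℕ) : Prop :=
  idx 0 = 0 ∧ idx t = k' ∧ (∀ j, j < t → idx j ≠ k') ∧
    ∀ j, j < t →
      Reaches a b k' (idx j) (idx (j + 1)) ∧
        (∀ l, l < j → ¬ Reaches a b k' (idx l) (idx (j + 1))) ∧
        ∀ r, r < idx (j + 1) → Reaches a b k' (idx j) r → ∃ l, l < j ∧ Reaches a b k' (idx l) r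

/-- Condition (2) of Proposition 4.5 (with lower 1-length `i` and upper 1-length `k`),
for the maximal cadet sequence `(v 1, …, v t)` containing the node `1 = v j`. -/
def Cond9 {n m : ℕ} (S : Fin n → Fin n → Finset ℤ) (T : PlaneTree n m)
    (t : ℕ) (v : ℕ → Fin n) (j i k : ℕ) : Prop :=
  i < j ∧ k ≤ t - j ∧
    (∀ s : ℕ, 1 ≤ s → s ≤ t → (s < j - i - 1 ∨ j + k + 1 < s) →
      IsMaxSCadetWindow S T t v s s) ∧
    IsMaxSCadetWindow S T t v (j - i) (j + k) ∧
    (j - i ≠ 1 → IsMaxSCadetWindow S T t v (j - i - 1) (j - 1)) ∧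
    (j - i = 1 → i = 0) ∧
    (j + k ≠ t → IsMaxSCadetWindow S T t v (j + 1) (j + k + 1)) ∧
    (j + k = t → k = 0) ∧
    ∀ a' b' : ℕ, IsMaxSCadetWindow S T t v a' b' →
      ((a' = b' ∧ (a' < j - i - 1 ∨ j + k + 1 < a')) ∨ (a' = j - i ∧ b' = j + k) ∨
        (j - i ≠ 1 ∧ a' = j - i - 1 ∧ b' = j - 1) ∨ (j + k ≠ t ∧ a' = j + 1 ∧ b' = j + k + 1))

/-! Every `S`-cadet sequence lies inside a single maximal cadet sequence, because the node set
of a maximal cadet sequence is closed under taking cadets and under undoing them. Hence an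
`S`-boxing of the tree is the same as a choice of an `S`-boxing of each maximal cadet sequence,
with the number of boxes adding up, and the signed sum factors. -/

section CadetSequences

variable {n m : ℕ} {S : Fin n → Fin n → Finset ℤ} {T : PlaneTree n m}
  {X Z : Finset (Fin n)} {B B' : Finset (Finset (Fin n))}

theorem PlaneTree.IsCadet.unique {u v w : Fin n} (hv : T.IsCadet u v) (hw : T.IsCadet u w) :
    v = w :=
  T.pos_inj v w hv.1.1 hw.1.1 (hv.1.2.trans hw.1.2.symm) (le_antisymm (hw.2 v hv.1) (hv.2 w hw.1))

theorem IsMaxCadetSeq.cadet_mem_iff {k : ℕ} {v : ℕ → Fin n} (hv : IsMaxCadetSeq T k v)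
    {w w' : Fin n} (hw : T.IsCadet w w') :
    w ∈ (Finset.Icc 1 k).image v ↔ w' ∈ (Finset.Icc 1 k).image v := by
  simp only [Finset.mem_image, Finset.mem_Icc]
  constructor
  · rintro ⟨q, ⟨hq1, hqk⟩, rfl⟩
    have hqk' : q < k := lt_of_le_of_ne hqk fun h => hv.2.1 w' (h ▸ hw.1)
    refine ⟨q + 1, ⟨by omega, hqk'⟩, ?_⟩
    exact (hv.1.2.2 (q + 1) (by omega) hqk').unique hw
  · rintro ⟨q, ⟨hq1, hqk⟩, rfl⟩
    have hq1' : 1 < q := lt_of_le_of_ne hq1 fun h => hv.2.2 w (h ▸ hw)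
    refine ⟨q - 1, ⟨by omega, by omega⟩, ?_⟩
    exact (hv.1.2.2 q hq1' hqk).1.2.symm.trans hw.1.2

theorem IsMaxCadetSeq.image_subset_of_mem {k : ℕ} {v : ℕ → Fin n} (hv : IsMaxCadetSeq T k v)
    {k' : ℕ} {u : ℕ → Fin n} (hu : IsCadetWindow T u 1 k') {p : ℕ}
    (hp : p ∈ Finset.Icc 1 k') (hmem : u p ∈ (Finset.Icc 1 k).image v) :
    (Finset.Icc 1 k').image u ⊆ (Finset.Icc 1 k).image v := by
  have hstep : ∀ q, 1 ≤ q → q < k' →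
      (u q ∈ (Finset.Icc 1 k).image v ↔ u (q + 1) ∈ (Finset.Icc 1 k).image v) := fun q _ hq =>
    hv.cadet_mem_iff (hu.2.2 (q + 1) (by omega) hq)
  have hconst : ∀ q, 1 ≤ q → q ≤ k' →
      (u q ∈ (Finset.Icc 1 k).image v ↔ u 1 ∈ (Finset.Icc 1 k).image v) := by
    intro q hq
    induction q, hq using Nat.le_induction with
    | base => exact fun _ => Iff.rfl
    | succ q hq ih => exact fun hqk => (hstep q hq (by omega)).symm.trans (ih (by omega))
  rw [Finset.mem_Icc] at hp
  intro w hw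
  obtain ⟨q, hq, rfl⟩ := Finset.mem_image.mp hw
  rw [Finset.mem_Icc] at hq
  exact (hconst q hq.1 hq.2).mpr ((hconst p hp.1 hp.2).mp hmem)

theorem IsSBox.nonempty {Y : Finset (Fin n)} (h : IsSBox S T Y) : Y.Nonempty := by
  obtain ⟨k, v, hw, _, rfl⟩ := h
  exact ⟨v 1, Finset.mem_image_of_mem v (Finset.mem_Icc.mpr ⟨le_rfl, hw.1.2.1⟩)⟩

namespace IsSBoxingOf

theorem not_subset_of_disjoint (h : IsSBoxingOf S T X B) (hXZ : Disjoint X Z)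
    {Y : Finset (Fin n)} (hY : Y ∈ B) : ¬ Y ⊆ Z := fun hYZ =>
  have ⟨_, hy⟩ := (h.1 Y hY).1.nonempty
  Finset.disjoint_left.mp hXZ ((h.1 Y hY).2 hy) (hYZ hy)

theorem card_le (h : IsSBoxingOf S T X B) : B.card ≤ X.card :=
  calc B.card ≤ ∑ Y ∈ B, Y.card := by
        simpa using B.card_nsmul_le_sum Finset.card 1 fun Y hY =>
          Finset.card_pos.mpr (h.1 Y hY).1.nonempty
    _ = (B.biUnion id).card := by
        refine (Finset.card_biUnion fun Y hY Y' hY' hne => Finset.disjoint_left.mpr ?_).symm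
        intro u huY huY'
        obtain ⟨_, _, huniq⟩ := h.2 u ((h.1 Y hY).2 huY)
        exact hne ((huniq Y ⟨hY, huY⟩).trans (huniq Y' ⟨hY', huY'⟩).symm)
    _ ≤ X.card := Finset.card_le_card <| Finset.biUnion_subset.mpr fun Y hY => (h.1 Y hY).2

theorem empty_iff : IsSBoxingOf S T ∅ B ↔ B = ∅ := by
  refine ⟨fun h => Finset.eq_empty_of_forall_notMem fun Y hY => ?_, ?_⟩
  · exact h.not_subset_of_disjoint (Finset.disjoint_empty_left ∅) hY (h.1 Y hY).2
  · rintro rfl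
    exact ⟨fun Y hY => absurd hY (Finset.notMem_empty Y),
      fun u hu => absurd hu (Finset.notMem_empty u)⟩

theorem union (h : IsSBoxingOf S T X B) (h' : IsSBoxingOf S T Z B') (hXZ : Disjoint X Z) :
    IsSBoxingOf S T (X ∪ Z) (B ∪ B') := by
  refine ⟨fun Y hY => ?_, fun u hu => ?_⟩
  · rcases Finset.mem_union.mp hY with hY | hY
    · exact ⟨(h.1 Y hY).1, (h.1 Y hY).2.trans Finset.subset_union_left⟩
    · exact ⟨(h'.1 Y hY).1, (h'.1 Y hY).2.trans Finset.subset_union_right⟩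
  · rcases Finset.mem_union.mp hu with hu | hu
    · obtain ⟨Y, ⟨hYB, huY⟩, huniq⟩ := h.2 u hu
      refine ⟨Y, ⟨Finset.mem_union_left _ hYB, huY⟩, fun Y' ⟨hY', huY'⟩ => ?_⟩
      rcases Finset.mem_union.mp hY' with hY' | hY'
      · exact huniq Y' ⟨hY', huY'⟩
      · exact absurd ((h'.1 Y' hY').2 huY') (Finset.disjoint_left.mp hXZ hu)
    · obtain ⟨Y, ⟨hYB, huY⟩, huniq⟩ := h'.2 u hu
      refine ⟨Y, ⟨Finset.mem_union_right _ hYB, huY⟩, fun Y' ⟨hY', huY'⟩ => ?_⟩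
      rcases Finset.mem_union.mp hY' with hY' | hY'
      · exact absurd ((h.1 Y' hY').2 huY') (Finset.disjoint_right.mp hXZ hu)
      · exact huniq Y' ⟨hY', huY'⟩

theorem filter_subset_left (h : IsSBoxingOf S T (X ∪ Z) B) (hXZ : Disjoint X Z)
    (hB : ∀ Y ∈ B, Y ⊆ X ∨ Y ⊆ Z) : IsSBoxingOf S T X (B.filter (· ⊆ X)) := by
  refine ⟨fun Y hY => ?_, fun u hu => ?_⟩
  · rw [Finset.mem_filter] at hY
    exact ⟨(h.1 Y hY.1).1, hY.2⟩
  · obtain ⟨Y, ⟨hYB, huY⟩, huniq⟩ := h.2 u (Finset.mem_union_left Z hu)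
    have hYX : Y ⊆ X := (hB Y hYB).resolve_right fun hYZ =>
      Finset.disjoint_left.mp hXZ hu (hYZ huY)
    exact ⟨Y, ⟨Finset.mem_filter.mpr ⟨hYB, hYX⟩, huY⟩,
      fun Y' ⟨hY', huY'⟩ => huniq Y' ⟨(Finset.mem_filter.mp hY').1, huY'⟩⟩

theorem filter_union_left (h : IsSBoxingOf S T X B) (h' : IsSBoxingOf S T Z B')
    (hXZ : Disjoint X Z) : (B ∪ B').filter (· ⊆ X) = B := by
  rw [Finset.filter_union, Finset.filter_true_of_mem fun Y hY => (h.1 Y hY).2,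
    Finset.filter_false_of_mem fun Y hY => h'.not_subset_of_disjoint hXZ.symm hY,
    Finset.union_empty]

end IsSBoxingOf

theorem contrib_empty : contrib S T ∅ = 1 := by
  simp only [contrib, IsSBoxingOf.empty_iff, Finset.sum_ite_eq', Finset.mem_univ, if_true,
    Finset.card_empty, Nat.zero_sub, pow_zero]

theorem contrib_union (hXZ : Disjoint X Z)
    (hsplit : ∀ Y, IsSBox S T Y → Y ⊆ X ∪ Z → Y ⊆ X ∨ Y ⊆ Z) :
    contrib S T (X ∪ Z) = contrib S T X * contrib S T Z := by
  have hblocks : ∀ B, IsSBoxingOf S T (X ∪ Z) B → ∀ Y ∈ B, Y ⊆ X ∨ Y ⊆ Z :=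
    fun B hB Y hY => hsplit Y (hB.1 Y hY).1 (hB.1 Y hY).2
  simp only [contrib, ← Finset.sum_filter, Finset.sum_mul_sum, ← Finset.sum_product']
  refine (Finset.sum_nbij' (fun p => p.1 ∪ p.2)
    (fun B => (B.filter (· ⊆ X), B.filter (· ⊆ Z))) ?_ ?_ ?_ ?_ ?_).symm
  · simp only [Finset.mem_product, Finset.mem_filter, Finset.mem_univ, true_and]
    exact fun p hp => hp.1.union hp.2 hXZ
  · simp only [Finset.mem_product, Finset.mem_filter, Finset.mem_univ, true_and]
    exact fun B hB => ⟨hB.filter_subset_left hXZ (hblocks B hB),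
      (Finset.union_comm X Z ▸ hB).filter_subset_left hXZ.symm fun Y hY =>
        (hblocks B hB Y hY).symm⟩
  · simp only [Finset.mem_product, Finset.mem_filter, Finset.mem_univ, true_and]
    rintro ⟨B, B'⟩ ⟨hB, hB'⟩
    rw [Prod.mk.injEq, hB.filter_union_left hB' hXZ, Finset.union_comm,
      hB'.filter_union_left hB hXZ.symm]
    exact ⟨rfl, rfl⟩
  · simp only [Finset.mem_filter, Finset.mem_univ, true_and]
    intro B hB
    ext Y
    simp only [Finset.mem_union, Finset.mem_filter, ← and_or_left]
    exact ⟨fun h => h.1, fun hY => ⟨hY, hblocks B hB Y hY⟩⟩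
  · simp only [Finset.mem_product, Finset.mem_filter, Finset.mem_univ, true_and]
    rintro ⟨B, B'⟩ ⟨hB, hB'⟩
    have hBB' : Disjoint B B' := Finset.disjoint_left.mpr fun Y hY hY' =>
      hB'.not_subset_of_disjoint hXZ.symm hY' (hB.1 Y hY).2
    have hBX : B.card ≤ X.card := hB.card_le
    have hBZ : B'.card ≤ Z.card := hB'.card_le
    change (-1 : ℤ) ^ (X.card - B.card) * (-1) ^ (Z.card - B'.card) =
      (-1) ^ ((X ∪ Z).card - (B ∪ B').card)
    rw [← pow_add, Finset.card_union_of_disjoint hXZ, Finset.card_union_of_disjoint hBB']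
    congr 1
    omega

theorem contrib_biUnion {ι : Type*} (s : Finset ι) (X : ι → Finset (Fin n))
    (hdisj : (s : Set ι).PairwiseDisjoint X)
    (hbox : ∀ Y, IsSBox S T Y → ∀ i ∈ s, ∀ u ∈ Y, u ∈ X i → Y ⊆ X i) :
    contrib S T (s.biUnion X) = ∏ i ∈ s, contrib S T (X i) := by
  induction s using Finset.induction_on with
  | empty => exact contrib_empty
  | insert a s ha ih =>
    rw [Finset.coe_insert, Set.pairwiseDisjoint_insert_of_notMem ha] at hdisj
    rw [Finset.biUnion_insert, Finset.prod_insert ha,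
      ← ih hdisj.1 fun Y hY i hi => hbox Y hY i (Finset.mem_insert_of_mem hi)]
    refine contrib_union ((Finset.disjoint_biUnion_right _ _ _).mpr hdisj.2) ?_
    intro Y hY hYsub
    obtain ⟨y, hy⟩ := hY.nonempty
    rcases Finset.mem_union.mp (hYsub hy) with hya | hys
    · exact .inl (hbox Y hY a (Finset.mem_insert_self a s) y hy hya)
    · obtain ⟨i, hi, hyi⟩ := Finset.mem_biUnion.mp hys
      exact .inr ((hbox Y hY i (Finset.mem_insert_of_mem hi) y hy hyi).trans
        (Finset.subset_biUnion_of_mem X hi))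

end CadetSequences

/-- Lemma 3.5: the contribution of a tree equals the product of the
contributions of its maximal cadet sequences `X_1, …, X_t` (which partition its nodes). -/
theorem statement_0 {n : ℕ} (S : Fin n → Fin n → Finset ℤ) (T : PlaneTree n (mOf S))
    (t : ℕ) (ks : ℕ → ℕ) (vs : ℕ → ℕ → Fin n)
    (hmax : ∀ j, 1 ≤ j → j ≤ t → IsMaxCadetSeq T (ks j) (vs j) ∧ WindowInj (vs j) 1 (ks j))
    (hcover : (Finset.Icc 1 t).biUnion (fun j => (Finset.Icc 1 (ks j)).image (vs j)) =
      (Finset.univ : Finset (Fin n)))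
    (hdisj : ∀ j l, 1 ≤ j → j < l → l ≤ t →
      Disjoint ((Finset.Icc 1 (ks j)).image (vs j)) ((Finset.Icc 1 (ks l)).image (vs l))) :
    treeContrib S T = ∏ j ∈ Finset.Icc 1 t, contrib S T ((Finset.Icc 1 (ks j)).image (vs j)) := by
  rw [treeContrib, ← hcover]
  refine contrib_biUnion _ _ (fun j hj l hl hjl => ?_) ?_
  · rw [Finset.mem_coe, Finset.mem_Icc] at hj hl
    rcases lt_or_gt_of_ne hjl with h | h
    exacts [hdisj j l hj.1 h hl.2, (hdisj l j hl.1 h hj.2).symm]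
  · rintro Y ⟨k, v, hv, -, rfl⟩ j hj u hu hmem
    obtain ⟨p, hp, rfl⟩ := Finset.mem_image.mp hu
    rw [Finset.mem_Icc] at hj
    exact (hmax j hj.1 hj.2).1.image_subset_of_mem hv.1 hp hmem
end

section
/- Let T ∈ T^(m)(n) and let X = (v_1, …, v_k) be a maximal cadet sequence of T. Then for every index 1 ≤ i ≤ k there exist unique indices 1 ≤ i' ≤ i ≤ i'' ≤ k such that (v_{i'}, …, v_i, …, v_{i''}) is an S-connected cadet sequence. Consequently, X can be uniquely partitioned into S-connected cadet sequences. -/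
/-!
Cadets are unique in both directions (a node has one rightmost node child, a node one parent),
so every cadet sequence through a node of the maximal cadet sequence `X = (v 1, …, v k)`,
in particular every maximal `S`-cadet sequence meeting `X`, is a window `v '' [a, b]` of `X`.
Hence the `S`-connected cadet sequences inside `X` are the windows over index intervals
`[c, d]` that are minimal among the intervals saturated by the maximal `S`-cadet windows
(every such window meeting `[c, d]` lies inside it).

Two saturated intervals through `i` intersect in a saturated interval, so two minimal ones
through `i` coincide. If a saturated interval through `i` is not minimal, it contains a
saturated `[c', d']`, and `[c', d']` or one of the two pieces beside it is a strictly shorter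
saturated interval through `i`; descending on length from `[1, k]` gives a minimal one.
-/

open scoped Classical

section SaturatedIcc

variable (W : ℕ → ℕ → Prop)

def SaturatedIcc (c d : ℕ) : Prop :=
  ∀ a b, W a b → ∀ q, a ≤ q → q ≤ b → c ≤ q → q ≤ d → c ≤ a ∧ b ≤ d

def MinimalSaturatedIcc (c d : ℕ) : Prop :=
  c ≤ d ∧ SaturatedIcc W c d ∧
    ∀ c' d', c ≤ c' → c' ≤ d' → d' ≤ d → SaturatedIcc W c' d' → c' = c ∧ d' = d

variable {W}

lemma SaturatedIcc.inter {c₁ d₁ c₂ d₂ : ℕ} (h₁ : SaturatedIcc W c₁ d₁)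
    (h₂ : SaturatedIcc W c₂ d₂) : SaturatedIcc W (max c₁ c₂) (min d₁ d₂) := by
  intro a b hab q haq hqb hcq hqd
  have := h₁ a b hab q haq hqb (by omega) (by omega)
  have := h₂ a b hab q haq hqb (by omega) (by omega)
  omega

lemma SaturatedIcc.left_of_inner {c d c' d' : ℕ} (h : SaturatedIcc W c d)
    (h' : SaturatedIcc W c' d') (hcc' : c < c') (hc'd' : c' ≤ d') (hd'd : d' ≤ d) :
    SaturatedIcc W c (c' - 1) := by
  intro a b hab q haq hqb hcq hqc'
  have hout := h a b hab q haq hqb hcq (by omega)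
  refine ⟨hout.1, by_contra fun hb => ?_⟩
  have := h' a b hab c' (by omega) (by omega) le_rfl hc'd'
  omega

lemma SaturatedIcc.right_of_inner {c d c' d' : ℕ} (h : SaturatedIcc W c d)
    (h' : SaturatedIcc W c' d') (hcc' : c ≤ c') (hc'd' : c' ≤ d') :
    SaturatedIcc W (d' + 1) d := by
  intro a b hab q haq hqb hdq hqd
  have hout := h a b hab q haq hqb (by omega) hqd
  refine ⟨by_contra fun ha => ?_, hout.2⟩
  have := h' a b hab d' (by omega) (by omega) hc'd' le_rfl
  omega

lemma SaturatedIcc.exists_minimalSaturatedIcc {c d i : ℕ} (h : SaturatedIcc W c d)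
    (hci : c ≤ i) (hid : i ≤ d) :
    ∃ c' d', c ≤ c' ∧ c' ≤ i ∧ i ≤ d' ∧ d' ≤ d ∧ MinimalSaturatedIcc W c' d' := by
  induction hlen : d - c using Nat.strong_induction_on generalizing c d with
  | _ len ih =>
    by_cases hmin : MinimalSaturatedIcc W c d
    · exact ⟨c, d, le_rfl, hci, hid, le_rfl, hmin⟩
    obtain ⟨c', d', hcc', hc'd', hd'd, hsat', hne⟩ : ∃ c' d', c ≤ c' ∧ c' ≤ d' ∧ d' ≤ d ∧
        SaturatedIcc W c' d' ∧ ¬ (c' = c ∧ d' = d) := by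
      simpa [MinimalSaturatedIcc, h, show c ≤ d by omega] using hmin
    have recurse : ∀ e f, SaturatedIcc W e f → c ≤ e → e ≤ i → i ≤ f → f ≤ d → f - e < len →
        ∃ c' d', c ≤ c' ∧ c' ≤ i ∧ i ≤ d' ∧ d' ≤ d ∧ MinimalSaturatedIcc W c' d' := by
      intro e f hef hce hei hif hfd hlt
      obtain ⟨c'', d'', h₁, h₂, h₃, h₄, hmin''⟩ := ih _ hlt hef hei hif rfl
      exact ⟨c'', d'', by omega, h₂, h₃, by omega, hmin''⟩
    rcases lt_or_ge i c' with hic' | hc'i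
    · exact recurse c (c' - 1) (h.left_of_inner hsat' (by omega) hc'd' hd'd) le_rfl hci
        (by omega) (by omega) (by omega)
    rcases lt_or_ge d' i with hd'i | hid'
    · exact recurse (d' + 1) d (h.right_of_inner hsat' hcc' hc'd') (by omega) (by omega)
        hid le_rfl (by omega)
    · exact recurse c' d' hsat' hcc' hc'i hid' hd'd (by omega)

lemma MinimalSaturatedIcc.eq_of_mem {c₁ d₁ c₂ d₂ i : ℕ} (h₁ : MinimalSaturatedIcc W c₁ d₁)
    (h₂ : MinimalSaturatedIcc W c₂ d₂) (hi₁ : c₁ ≤ i ∧ i ≤ d₁) (hi₂ : c₂ ≤ i ∧ i ≤ d₂) :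
    c₁ = c₂ ∧ d₁ = d₂ := by
  have hinter := h₁.2.1.inter h₂.2.1
  have e₁ := h₁.2.2 _ _ (le_max_left _ _) (by omega) (min_le_left _ _) hinter
  have e₂ := h₂.2.2 _ _ (le_max_right _ _) (by omega) (min_le_right _ _) hinter
  omega

theorem existsUnique_minimalSaturatedIcc {l u i : ℕ} (hW : ∀ a b, W a b → l ≤ a ∧ b ≤ u)
    (hli : l ≤ i) (hiu : i ≤ u) :
    ∃! p : ℕ × ℕ, l ≤ p.1 ∧ p.1 ≤ i ∧ i ≤ p.2 ∧ p.2 ≤ u ∧ MinimalSaturatedIcc W p.1 p.2 := by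
  have hsat : SaturatedIcc W l u := fun a b hab _ _ _ _ _ => hW a b hab
  obtain ⟨c, d, hlc, hci, hid, hdu, hmin⟩ := hsat.exists_minimalSaturatedIcc hli hiu
  refine ⟨(c, d), ⟨hlc, hci, hid, hdu, hmin⟩, fun ⟨c', d'⟩ ⟨_, hc'i, hid', _, hmin'⟩ => ?_⟩
  obtain ⟨rfl, rfl⟩ := hmin'.eq_of_mem hmin ⟨hc'i, hid'⟩ ⟨hci, hid⟩
  rfl

end SaturatedIcc

namespace PlaneTree

variable {n m : ℕ} {T : PlaneTree n m} {u u' v w : Fin n}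

lemma IsCadet.right_unique (hv : T.IsCadet u v) (hw : T.IsCadet u w) : v = w :=
  T.pos_inj v w hv.1.1 hw.1.1 (hv.1.2.trans hw.1.2.symm) (le_antisymm (hw.2 v hv.1) (hv.2 w hw.1))

lemma IsCadet.left_unique (hu : T.IsCadet u v) (hu' : T.IsCadet u' v) : u = u' :=
  hu.1.2.symm.trans hu'.1.2

end PlaneTree

section CadetWindow

variable {n m : ℕ} {T : PlaneTree n m} {v w : ℕ → Fin n} {a b a' b' p q : ℕ}

lemma IsCadetWindow.isCadet (hv : IsCadetWindow T v a b) (hap : a ≤ p) (hpb : p < b) :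
    T.IsCadet (v p) (v (p + 1)) := by
  simpa using hv.2.2 (p + 1) (by omega) hpb

lemma IsCadetWindow.apply_add_eq (hv : IsCadetWindow T v a b) (hw : IsCadetWindow T w a' b')
    (h : v p = w q) (hap : a ≤ p) (haq : a' ≤ q) :
    ∀ d, p + d ≤ b → q + d ≤ b' → v (p + d) = w (q + d) := by
  intro d
  induction d with
  | zero => exact fun _ _ => h
  | succ d ih =>
    intro hpb hqb
    have hv' := hv.isCadet (p := p + d) (by omega) (by omega)
    have hw' := hw.isCadet (p := q + d) (by omega) (by omega)
    rw [← ih (by omega) (by omega)] at hw'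
    exact hv'.right_unique hw'

lemma IsCadetWindow.apply_sub_eq (hv : IsCadetWindow T v a b) (hw : IsCadetWindow T w a' b')
    (h : v p = w q) (hpb : p ≤ b) (hqb : q ≤ b') :
    ∀ d, a + d ≤ p → a' + d ≤ q → v (p - d) = w (q - d) := by
  intro d
  induction d with
  | zero => exact fun _ _ => h
  | succ d ih =>
    intro hap haq
    have hv' := hv.isCadet (p := p - (d + 1)) (by omega) (by omega)
    have hw' := hw.isCadet (p := q - (d + 1)) (by omega) (by omega)
    rw [show p - (d + 1) + 1 = p - d by omega] at hv'
    rw [show q - (d + 1) + 1 = q - d by omega, ← ih (by omega) (by omega)] at hw'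
    exact hv'.left_unique hw'

end CadetWindow

section MaxCadetSeq

variable {n m : ℕ} {T : PlaneTree n m} {v w : ℕ → Fin n} {a b k k' p q : ℕ}

lemma IsMaxCadetSeq.sub_le_sub_of_apply_eq (hv : IsMaxCadetSeq T k v) (hw : IsCadetWindow T w a b)
    (h : v p = w q) (hp : 1 ≤ p) (hpk : p ≤ k) (haq : a ≤ q) (hqb : q ≤ b) :
    b - q ≤ k - p := by
  by_contra! hlt
  have hend := hv.1.apply_add_eq hw h hp haq (k - p) (by omega) (by omega)
  rw [Nat.add_sub_cancel' hpk] at hend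
  exact hv.2.1 _ (hend ▸ hw.isCadet (p := q + (k - p)) (by omega) (by omega)).1

lemma IsMaxCadetSeq.sub_le_pred_of_apply_eq (hv : IsMaxCadetSeq T k v) (hw : IsCadetWindow T w a b)
    (h : v p = w q) (hp : 1 ≤ p) (hpk : p ≤ k) (hqb : q ≤ b) :
    q - a ≤ p - 1 := by
  by_contra! hlt
  have hstart := hv.1.apply_sub_eq hw h hpk hqb (p - 1) (by omega) (by omega)
  rw [Nat.sub_sub_self hp] at hstart
  have hcadet := hw.isCadet (p := q - (p - 1) - 1) (by omega) (by omega)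
  rw [Nat.sub_add_cancel (by omega), ← hstart] at hcadet
  exact hv.2.2 _ hcadet

lemma IsMaxCadetSeq.eq_of_apply_eq (hv : IsMaxCadetSeq T k v) (hw : IsMaxCadetSeq T k' w)
    (h : v p = w q) (hp : 1 ≤ p) (hpk : p ≤ k) (hq : 1 ≤ q) (hqk : q ≤ k') :
    p = q ∧ k = k' ∧ ∀ r, 1 ≤ r → r ≤ k → v r = w r := by
  have hafter := hv.sub_le_sub_of_apply_eq hw.1 h hp hpk hq hqk
  have hafter' := hw.sub_le_sub_of_apply_eq hv.1 h.symm hq hqk hp hpk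
  have hbefore := hv.sub_le_pred_of_apply_eq hw.1 h hp hpk hqk
  have hbefore' := hw.sub_le_pred_of_apply_eq hv.1 h.symm hq hqk hpk
  obtain ⟨rfl, rfl⟩ : p = q ∧ k = k' := by omega
  have hstart := hv.1.apply_sub_eq hw.1 h hpk hpk (p - 1) (by omega) (by omega)
  rw [Nat.sub_sub_self hp] at hstart
  refine ⟨rfl, rfl, fun r hr hrk => ?_⟩
  simpa [Nat.add_sub_cancel' hr] using
    hv.1.apply_add_eq hw.1 hstart le_rfl le_rfl (r - 1) (by omega) (by omega)

end MaxCadetSeq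

section SCadetWindow

variable {n m : ℕ} {S : Fin n → Fin n → Finset ℤ} {T : PlaneTree n m} {v w : ℕ → Fin n}
  {a b k : ℕ}

lemma IsSCadetWindow.congr (hv : IsSCadetWindow S T v a b)
    (h : ∀ r, a ≤ r → r ≤ b → v r = w r) : IsSCadetWindow S T w a b := by
  obtain ⟨⟨ha, hab, hcadet⟩, hsum⟩ := hv
  refine ⟨⟨ha, hab, fun p hap hpb => ?_⟩, fun i j hai hij hjb => ?_⟩
  · rw [← h p (by omega) hpb, ← h (p - 1) (by omega) (by omega)]
    exact hcadet p hap hpb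
  · rw [← h i hai (by omega), ← h j (by omega) hjb,
      Finset.sum_congr rfl fun p hp => by
        have hp := Finset.mem_Icc.1 hp
        rw [← h p (by omega) (by omega)]]
    exact hsum i j hai hij hjb

lemma isSCadetWindow_congr (h : ∀ r, 1 ≤ r → r ≤ k → v r = w r) (hbk : b ≤ k) :
    IsSCadetWindow S T v a b ↔ IsSCadetWindow S T w a b :=
  ⟨fun hv => hv.congr fun r har hrb => h r (hv.1.1.trans har) (hrb.trans hbk),
    fun hw => hw.congr fun r har hrb => (h r (hw.1.1.trans har) (hrb.trans hbk)).symm⟩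

lemma IsMaxSCadetWindow.congr (hv : IsMaxSCadetWindow S T k v a b)
    (h : ∀ r, 1 ≤ r → r ≤ k → v r = w r) : IsMaxSCadetWindow S T k w a b := by
  obtain ⟨hbk, hwin, hleft, hright⟩ := hv
  refine ⟨hbk, (isSCadetWindow_congr h hbk).1 hwin, ?_, ?_⟩
  · simpa only [isSCadetWindow_congr h hbk] using hleft
  · by_cases hb : b = k
    · exact Or.inl hb
    · simpa only [isSCadetWindow_congr h (show b + 1 ≤ k by omega)] using hright

end SCadetWindow

lemma image_Icc_comp_add_right {β : Type*} [DecidableEq β] (f : ℕ → β) (a b s : ℕ) :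
    (Finset.Icc a b).image (fun r => f (r + s)) = (Finset.Icc (a + s) (b + s)).image f := by
  rw [← Finset.image_add_right_Icc, Finset.image_image]
  rfl

section CadetSeqSet

variable {n m : ℕ} {S : Fin n → Fin n → Finset ℤ} {T : PlaneTree n m} {v : ℕ → Fin n}
  {X Y : Finset (Fin n)} {a b c d k p : ℕ}

lemma WindowInj.injOn (hinj : WindowInj v a b) : Set.InjOn v (Set.Icc a b) :=
  fun p hp q hq h => hinj p q hp.1 hp.2 hq.1 hq.2 h

lemma WindowInj.image_Icc_subset_image_Icc_iff (hinj : WindowInj v 1 k) (ha : 1 ≤ a)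
    (hab : a ≤ b) (hbk : b ≤ k) (hc : 1 ≤ c) (hdk : d ≤ k) :
    (Finset.Icc a b).image v ⊆ (Finset.Icc c d).image v ↔ c ≤ a ∧ b ≤ d := by
  rw [← Finset.coe_subset, Finset.coe_image, Finset.coe_image,
    hinj.injOn.image_subset_image_iff (by simpa using Set.Icc_subset_Icc ha hbk)
      (by simpa using Set.Icc_subset_Icc hc hdk),
    Finset.coe_subset, Finset.Icc_subset_Icc_iff hab]

lemma IsMaxSCadetSet.exists_eq_image_Icc (hv : IsMaxCadetSeq T k v) (hY : IsMaxSCadetSet S T Y)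
    (hp : 1 ≤ p) (hpk : p ≤ k) (hpY : v p ∈ Y) :
    ∃ a b, IsMaxSCadetWindow S T k v a b ∧ a ≤ p ∧ p ≤ b ∧ Y = (Finset.Icc a b).image v := by
  obtain ⟨k', w, a, b, hw, -, hwin, rfl⟩ := hY
  obtain ⟨q, hq, hwq⟩ := Finset.mem_image.1 hpY
  have hab := Finset.mem_Icc.1 hq
  obtain ⟨rfl, rfl, hagree⟩ :=
    hw.eq_of_apply_eq hv hwq (hwin.2.1.1.1.trans hab.1) (hab.2.trans hwin.1) hp hpk
  refine ⟨a, b, hwin.congr hagree, hab.1, hab.2, Finset.image_congr fun r hr => ?_⟩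
  have hr := Finset.mem_Icc.1 hr
  exact hagree r (hwin.2.1.1.1.trans hr.1) (hr.2.trans hwin.1)

lemma isCadetSeqSet_image_Icc (hv : IsCadetWindow T v 1 k) (hinj : WindowInj v 1 k)
    (hc : 1 ≤ c) (hcd : c ≤ d) (hdk : d ≤ k) : IsCadetSeqSet T ((Finset.Icc c d).image v) := by
  refine ⟨d + 1 - c, fun r => v (r + (c - 1)), ⟨le_rfl, by omega, fun r hr hrd => ?_⟩,
    fun r s hr hrd hs hsd hrs => ?_, ?_⟩
  · simpa [show r - 1 + (c - 1) = r + (c - 1) - 1 by omega] using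
      hv.2.2 (r + (c - 1)) (by omega) (by omega)
  · have := hinj _ _ (by omega) (by omega) (by omega) (by omega) hrs
    omega
  · rw [image_Icc_comp_add_right]
    congr 2 <;> omega

lemma IsCadetSeqSet.exists_eq_image_Icc_of_subset (hv : IsMaxCadetSeq T k v)
    (hinj : WindowInj v 1 k) (hX : IsCadetSeqSet T X) (hc : 1 ≤ c) (hdk : d ≤ k)
    (hsub : X ⊆ (Finset.Icc c d).image v) :
    ∃ c' d', c ≤ c' ∧ c' ≤ d' ∧ d' ≤ d ∧ X = (Finset.Icc c' d').image v := by
  obtain ⟨k₀, w, hw, -, rfl⟩ := hX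
  obtain ⟨c', hc', hvc'⟩ := Finset.mem_image.1
    (hsub (Finset.mem_image_of_mem w (Finset.mem_Icc.2 ⟨le_rfl, hw.2.1⟩)))
  have hc' := Finset.mem_Icc.1 hc'
  have hk₀ : 1 ≤ k₀ := hw.2.1
  have hlen := hv.sub_le_sub_of_apply_eq hw hvc' (by omega) (by omega) le_rfl hk₀
  have himage : (Finset.Icc 1 k₀).image w = (Finset.Icc c' (c' + k₀ - 1)).image v := by
    have hagree := hv.1.apply_add_eq hw hvc' (by omega) le_rfl
    calc (Finset.Icc 1 k₀).image w
        = (Finset.Icc 1 k₀).image (fun r => v (r + (c' - 1))) := by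
          refine Finset.image_congr fun r hr => ?_
          have hr := Finset.mem_Icc.1 hr
          simpa [Nat.add_sub_cancel' hr.1, show c' + (r - 1) = r + (c' - 1) by omega] using
            (hagree (r - 1) (by omega) (by omega)).symm
      _ = (Finset.Icc c' (c' + k₀ - 1)).image v := by
          rw [image_Icc_comp_add_right]
          congr 2 <;> omega
  refine ⟨c', c' + k₀ - 1, hc'.1, by omega, ?_, himage⟩
  rw [himage, hinj.image_Icc_subset_image_Icc_iff (by omega) (by omega) (by omega) hc hdk] at hsub
  exact hsub.2

end CadetSeqSet

section SConnected

variable {n m : ℕ} {S : Fin n → Fin n → Finset ℤ} {T : PlaneTree n m} {v : ℕ → Fin n}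
  {c d k : ℕ}

lemma forall_isMaxSCadetSet_iff_saturatedIcc (hv : IsMaxCadetSeq T k v)
    (hinj : WindowInj v 1 k) (hc : 1 ≤ c) (hdk : d ≤ k) :
    (∀ Y, IsMaxSCadetSet S T Y →
        (Finset.Icc c d).image v ∩ Y = ∅ ∨ Y ⊆ (Finset.Icc c d).image v) ↔
      SaturatedIcc (IsMaxSCadetWindow S T k v) c d := by
  constructor
  · intro h a b hwin q haq hqb hcq hqd
    rcases h _ ⟨k, v, a, b, hv, hinj, hwin, rfl⟩ with hdisj | hsub
    · have hq : v q ∈ (Finset.Icc c d).image v ∩ (Finset.Icc a b).image v := by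
        simp only [Finset.mem_inter, Finset.mem_image, Finset.mem_Icc]
        exact ⟨⟨q, ⟨hcq, hqd⟩, rfl⟩, ⟨q, ⟨haq, hqb⟩, rfl⟩⟩
      simp [hdisj] at hq
    · exact (hinj.image_Icc_subset_image_Icc_iff hwin.2.1.1.1 (by omega) hwin.1 hc hdk).1 hsub
  · intro h Y hY
    rcases Finset.eq_empty_or_nonempty ((Finset.Icc c d).image v ∩ Y) with hdisj | ⟨y, hy⟩
    · exact Or.inl hdisj
    obtain ⟨hyX, hyY⟩ := Finset.mem_inter.1 hy
    obtain ⟨q, hq, rfl⟩ := Finset.mem_image.1 hyX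
    have hq := Finset.mem_Icc.1 hq
    obtain ⟨a, b, hwin, haq, hqb, rfl⟩ := hY.exists_eq_image_Icc hv (by omega) (by omega) hyY
    have hab := h a b hwin q haq hqb hq.1 hq.2
    exact Or.inr (Finset.image_subset_image (Finset.Icc_subset_Icc hab.1 hab.2))

lemma sConnected_image_Icc_iff (hv : IsMaxCadetSeq T k v) (hinj : WindowInj v 1 k)
    (hc : 1 ≤ c) (hcd : c ≤ d) (hdk : d ≤ k) :
    SConnected S T ((Finset.Icc c d).image v) ↔
      MinimalSaturatedIcc (IsMaxSCadetWindow S T k v) c d := by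
  rw [SConnected, MinimalSaturatedIcc, forall_isMaxSCadetSet_iff_saturatedIcc hv hinj hc hdk]
  simp only [isCadetSeqSet_image_Icc hv.1 hinj hc hcd hdk, hcd, true_and]
  refine and_congr_right fun _ => ⟨fun hmin c' d' hcc' hc'd' hd'd hsat' => ?_,
    fun hmin X' hX' hsat' hsub => ?_⟩
  · have heq := hmin _ (isCadetSeqSet_image_Icc hv.1 hinj (by omega) hc'd' (by omega))
      ((forall_isMaxSCadetSet_iff_saturatedIcc hv hinj (by omega) (by omega)).2 hsat')
      (Finset.image_subset_image (Finset.Icc_subset_Icc hcc' hd'd))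
    have := (hinj.image_Icc_subset_image_Icc_iff hc hcd hdk (by omega) (by omega)).1 heq.ge
    omega
  · obtain ⟨c', d', hcc', hc'd', hd'd, rfl⟩ :=
      hX'.exists_eq_image_Icc_of_subset hv hinj hc hdk hsub
    obtain ⟨rfl, rfl⟩ := hmin c' d' hcc' hc'd' hd'd
      ((forall_isMaxSCadetSet_iff_saturatedIcc hv hinj (by omega) (by omega)).1 hsat')
    rfl

end SConnected

/-- Lemma 3.9: every index `i` of a maximal cadet sequence
`(v 1, …, v k)` lies in a unique window `[i', i'']` which is an `S`-connected cadet
sequence; hence maximal cadet sequences are uniquely partitioned into `S`-connected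
cadet sequences. -/
theorem statement_1 {n : ℕ} (S : Fin n → Fin n → Finset ℤ) (T : PlaneTree n (mOf S))
    (k : ℕ) (v : ℕ → Fin n) (hmax : IsMaxCadetSeq T k v) (hinj : WindowInj v 1 k)
    (i : ℕ) (hi1 : 1 ≤ i) (hik : i ≤ k) :
    ∃! p : ℕ × ℕ, 1 ≤ p.1 ∧ p.1 ≤ i ∧ i ≤ p.2 ∧ p.2 ≤ k ∧
      SConnected S T ((Finset.Icc p.1 p.2).image v) := by
  have hwindows : ∀ a b, IsMaxSCadetWindow S T k v a b → 1 ≤ a ∧ b ≤ k :=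
    fun _ _ hwin => ⟨hwin.2.1.1.1, hwin.1⟩
  obtain ⟨⟨c, d⟩, ⟨hc, hci, hid, hdk, hmin⟩, hunique⟩ :=
    existsUnique_minimalSaturatedIcc hwindows hi1 hik
  refine ⟨(c, d), ⟨hc, hci, hid, hdk,
    (sConnected_image_Icc_iff hmax hinj hc (hci.trans hid) hdk).2 hmin⟩, ?_⟩
  rintro ⟨c', d'⟩ ⟨hc', hc'i, hid', hd'k, hconn⟩
  exact hunique (c', d') ⟨hc', hc'i, hid', hd'k,
    (sConnected_image_Icc_iff hmax hinj hc' (hc'i.trans hid') hd'k).1 hconn⟩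
end
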